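/- arXiv:2311.01610 — 4 statements merged into one kernel-verified Lean document; each statement's English description precedes it below -/
import Mathlib

section
/- Let B be a barcode over the finite totally ordered set S = {1 < 2 < ⋯ < n}. Then the number of interacting pairs of bars in B (counted with multiplicity) equals Σ_{1 ≤ i < j ≤ n} (r_{i,j-1} − r_{i,j})·(r_{i+1,j} − r_{i,j}); i.e., the codimension of the isoclass of the equioriented type-A_n quiver representation with barcode B, computed by the classical rank-array formula, equals the number of interacting pairs of bars in B. -/
/-!
Barcodes over the finite totally ordered set `S = {1 < 2 < ⋯ < n} ⊆ ℕ`.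
A bar (nonempty interval) in a finite total order is determined by its
birth (= min) and death (= max), so we record bars by these data.
-/

open scoped Classical

/-- A bar in `S = {1, …, n}`: a nonempty interval, recorded by its birth
(infimum) and death (supremum), which satisfy `1 ≤ birth ≤ death ≤ n`. -/
structure NatBar (n : ℕ) where
  birth : ℕ
  death : ℕ
  one_le_birth : 1 ≤ birth
  birth_le_death : birth ≤ death
  death_le : death ≤ n

/-- Bars `I, J` (with `b(I) ≤ b(J)`) are interlaced if `b(I) < b(J) ≤ d(I) < d(J)`. -/
def NatBar.Interlaced {n : ℕ} (I J : NatBar n) : Prop :=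
  I.birth < J.birth ∧ J.birth ≤ I.death ∧ I.death < J.death

/-- Bars `I, J` are non-separated if `d(I) < b(J)` and no element of
`S = {1, …, n}` lies strictly between `d(I)` and `b(J)`. -/
def NatBar.NonSep {n : ℕ} (I J : NatBar n) : Prop :=
  I.death < J.birth ∧ ∀ s : ℕ, 1 ≤ s → s ≤ n → ¬ (I.death < s ∧ s < J.birth)

/-- Two bars form an interacting pair if (in one order or the other) they are
interlaced or non-separated. -/
def NatBar.Interacting {n : ℕ} (I J : NatBar n) : Prop :=
  I.Interlaced J ∨ J.Interlaced I ∨ I.NonSep J ∨ J.NonSep I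

/-- The persistent Betti numbers of the barcode `B` (a finite multiset of bars,
given as an indexed family `B : Fin N → NatBar n`):
`r i j = #{bars I of B with b(I) ≤ i and d(I) ≥ j}`, counted with multiplicity. -/
def pBetti {n N : ℕ} (B : Fin N → NatBar n) (i j : ℕ) : ℕ :=
  (Finset.univ.filter fun p => (B p).birth ≤ i ∧ j ≤ (B p).death).card

/-!
An unordered interacting pair is the same as an ordered pair `(I, J)` with
`b(I) < b(J)`, `d(I) < d(J)` and `b(J) ≤ d(I) + 1`: in `{1, …, n}` "non-separated" means that
`J` is born right after `I` dies. Such a pair is recorded exactly once in the rank-array sum,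
at the cell `(i, j) = (b(J) - 1, d(I) + 1)`: there `r_{i,j-1} - r_{i,j}` counts the bars with
`b ≤ i` and `d = j - 1`, and `r_{i+1,j} - r_{i,j}` those with `b = i + 1` and `d ≥ j`.
-/

open Finset

namespace NatBar

variable {n : ℕ}

def InteractsBefore (I J : NatBar n) : Prop :=
  I.birth < J.birth ∧ I.death < J.death ∧ J.birth ≤ I.death + 1

theorem InteractsBefore.not_symm {I J : NatBar n} (h : I.InteractsBefore J) :
    ¬ J.InteractsBefore I :=
  fun h' => lt_asymm h.1 h'.1

theorem interlaced_or_nonSep_iff (I J : NatBar n) :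
    I.Interlaced J ∨ I.NonSep J ↔ I.InteractsBefore J := by
  have := I.birth_le_death
  have := J.birth_le_death
  have := J.death_le
  constructor
  · rintro (⟨hb, hbd, hd⟩ | ⟨hdb, hgap⟩)
    · exact ⟨hb, hd, by omega⟩
    · refine ⟨by omega, by omega, ?_⟩
      by_contra! h
      exact hgap (I.death + 1) (by omega) (by omega) ⟨by omega, h⟩
  · rintro ⟨hb, hd, hbd⟩
    by_cases h : J.birth ≤ I.death
    · exact Or.inl ⟨hb, h, hd⟩
    · exact Or.inr ⟨by omega, fun s _ _ => by omega⟩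

theorem interacting_iff (I J : NatBar n) :
    I.Interacting J ↔ I.InteractsBefore J ∨ J.InteractsBefore I := by
  rw [← interlaced_or_nonSep_iff, ← interlaced_or_nonSep_iff, Interacting]
  tauto

theorem InteractsBefore.cell_mem {I J : NatBar n} (h : I.InteractsBefore J) :
    (J.birth - 1, I.death + 1) ∈ {ij ∈ Icc 1 n ×ˢ Icc 1 n | ij.1 < ij.2} := by
  have := I.one_le_birth
  have := J.death_le
  obtain ⟨hb, hd, hbd⟩ := h
  simp only [mem_filter, mem_product, mem_Icc]
  omega

theorem interactsBefore_and_cell_eq_iff (I J : NatBar n) {i j : ℕ} (hij : i ≤ j) :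
    I.InteractsBefore J ∧ (J.birth - 1, I.death + 1) = (i, j + 1) ↔
      (I.birth ≤ i ∧ I.death = j) ∧ (J.birth = i + 1 ∧ j + 1 ≤ J.death) := by
  have := I.one_le_birth
  simp only [InteractsBefore, Prod.mk.injEq]
  omega

end NatBar

theorem card_filter_lt_and_or_swap {ι : Type*} [Fintype ι] [LinearOrder ι]
    {R : ι → ι → Prop} [DecidableRel R] (hR : ∀ a b, R a b → ¬ R b a) :
    #{p : ι × ι | p.1 < p.2 ∧ (R p.1 p.2 ∨ R p.2 p.1)} = #{p : ι × ι | R p.1 p.2} := by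
  refine card_bij' (fun p _ => if R p.1 p.2 then p else p.swap)
    (fun p _ => if p.1 < p.2 then p else p.swap) ?_ ?_ ?_ ?_
  all_goals
    rintro ⟨a, b⟩ h
    simp only [mem_filter, mem_univ, true_and] at h ⊢
    split_ifs <;> grind

section pBetti

variable {n N : ℕ} (B : Fin N → NatBar n)

theorem pBetti_sub_pBetti_succ (i j : ℕ) :
    pBetti B i j - pBetti B i (j + 1) = #{p | (B p).birth ≤ i ∧ (B p).death = j} := by
  rw [pBetti, pBetti,
    ← card_sdiff_of_subset (monotone_filter_right _ fun _ _ h => ⟨h.1, by omega⟩)]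
  congr 1
  ext p
  simp only [mem_sdiff, mem_filter, mem_univ, true_and]
  omega

theorem pBetti_succ_sub_pBetti (i j : ℕ) :
    pBetti B (i + 1) j - pBetti B i j = #{p | (B p).birth = i + 1 ∧ j ≤ (B p).death} := by
  rw [pBetti, pBetti,
    ← card_sdiff_of_subset (monotone_filter_right _ fun _ _ h => ⟨by omega, h.2⟩)]
  congr 1
  ext p
  simp only [mem_sdiff, mem_filter, mem_univ, true_and]
  omega

end pBetti

/-- For a barcode `B` over `S = {1 < ⋯ < n}`, the number of
interacting pairs of bars (counted with multiplicity) equals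
`Σ_{1 ≤ i < j ≤ n} (r_{i,j-1} − r_{i,j}) · (r_{i+1,j} − r_{i,j})`,
the classical rank-array formula for the codimension of the isoclass of the
corresponding equioriented type-A quiver representation. -/
theorem codim_eq_card_interacting_pairs {n N : ℕ} (B : Fin N → NatBar n) :
    ((Finset.univ : Finset (Fin N × Fin N)).filter
        (fun pq => pq.1 < pq.2 ∧ (B pq.1).Interacting (B pq.2))).card
      = ∑ i ∈ Finset.Icc 1 n, ∑ j ∈ Finset.Icc (i + 1) n,
          (pBetti B i (j - 1) - pBetti B i j) * (pBetti B (i + 1) j - pBetti B i j) := by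
  have hpairs : #{pq : Fin N × Fin N | pq.1 < pq.2 ∧ (B pq.1).Interacting (B pq.2)}
      = #{pq : Fin N × Fin N | (B pq.1).InteractsBefore (B pq.2)} := by
    simp only [NatBar.interacting_iff]
    exact card_filter_lt_and_or_swap (R := fun p q => (B p).InteractsBefore (B q))
      fun _ _ => NatBar.InteractsBefore.not_symm
  rw [hpairs, card_eq_sum_card_fiberwise fun pq hpq => (mem_filter.1 hpq).2.cell_mem,
    sum_finset_product _ (Icc 1 n) (fun i => Icc (i + 1) n) fun ij => by
      simp only [mem_filter, mem_product, mem_Icc]; omega]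
  refine sum_congr rfl fun i _ => sum_congr rfl fun j hj => ?_
  obtain ⟨k, rfl, hik⟩ : ∃ k, j = k + 1 ∧ i ≤ k := ⟨j - 1, by simp only [mem_Icc] at hj; omega⟩
  rw [Nat.add_sub_cancel, pBetti_sub_pBetti_succ, pBetti_succ_sub_pBetti, ← card_product,
    ← filter_product, univ_product_univ, filter_filter]
  congr 1
  ext pq
  simp only [mem_filter, mem_univ, true_and]
  exact NatBar.interactsBefore_and_cell_eq_iff _ _ hik
end

section
/- Let B be a barcode over S = {1 < 2 < ⋯ < n} with persistent Betti numbers r_{i,j}. Then the number of interlaced pairs of bars in B (counted with multiplicity) equals Σ_{1 ≤ i < j ≤ n, j−i ≥ 2} (r_{i,j-1} − r_{i,j})·(r_{i+1,j} − r_{i,j}). -/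
/-!
Barcodes over the finite totally ordered set `S = {1 < 2 < ⋯ < n} ⊆ ℕ`.
A bar (nonempty interval) in a finite total order is determined by its
birth (= min) and death (= max), so we record bars by these data.
-/

open scoped Classical

lemma card_filter_split {α : Type*} (s : Finset α) (p q : α → Prop) :
    (s.filter p).card
      = (s.filter (fun x => p x ∧ q x)).card + (s.filter (fun x => p x ∧ ¬ q x)).card := by
  classical
  rw [← Finset.filter_filter, ← Finset.filter_filter,
    Finset.card_filter_add_card_filter_not]

/-- For a barcode `B` over `S = {1 < ⋯ < n}`, the number of
interlaced pairs of bars (counted with multiplicity) equals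
`Σ_{1 ≤ i < j ≤ n, j−i ≥ 2} (r_{i,j-1} − r_{i,j}) · (r_{i+1,j} − r_{i,j})`. -/
theorem card_interlaced_pairs {n N : ℕ} (B : Fin N → NatBar n) :
    ((Finset.univ : Finset (Fin N × Fin N)).filter
        (fun pq => pq.1 < pq.2 ∧
          ((B pq.1).Interlaced (B pq.2) ∨ (B pq.2).Interlaced (B pq.1)))).card
      = ∑ i ∈ Finset.Icc 1 n, ∑ j ∈ Finset.Icc (i + 2) n,
          (pBetti B i (j - 1) - pBetti B i j) * (pBetti B (i + 1) j - pBetti B i j) := by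
  classical
  set T : Finset (Fin N × Fin N) :=
    Finset.univ.filter (fun pq => (B pq.1).Interlaced (B pq.2)) with hT
  -- Step 1: unordered interlaced pairs = ordered interlaced pairs
  have key : ∀ I J : NatBar n, I.Interlaced J → ¬ J.Interlaced I := by
    rintro I J ⟨h1, _, _⟩ ⟨h2, _, _⟩; omega
  have h1 : ((Finset.univ : Finset (Fin N × Fin N)).filter
        (fun pq => pq.1 < pq.2 ∧
          ((B pq.1).Interlaced (B pq.2) ∨ (B pq.2).Interlaced (B pq.1)))).card
      = T.card := by
    refine Finset.card_bij'
      (fun pq _ => if (B pq.1).Interlaced (B pq.2) then pq else pq.swap)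
      (fun pq _ => if pq.1 < pq.2 then pq else pq.swap) ?_ ?_ ?_ ?_
    · intro a ha
      simp only [Finset.mem_filter, Finset.mem_univ, true_and] at ha
      simp only [hT, Finset.mem_filter, Finset.mem_univ, true_and]
      split <;> rename_i h
      · exact h
      · simpa using ha.2.resolve_left h
    · intro a ha
      simp only [hT, Finset.mem_filter, Finset.mem_univ, true_and] at ha
      simp only [Finset.mem_filter, Finset.mem_univ, true_and]
      have hne : a.1 ≠ a.2 := fun h => by
        rw [h] at ha; exact absurd ha.1 (lt_irrefl _)
      split <;> rename_i h
      · exact ⟨h, Or.inl ha⟩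
      · refine ⟨lt_of_le_of_ne (not_lt.mp h) (Ne.symm hne), Or.inr ?_⟩
        simpa using ha
    · intro a ha
      simp only [Finset.mem_filter, Finset.mem_univ, true_and] at ha
      by_cases h : (B a.1).Interlaced (B a.2)
      · simp [h, ha.1]
      · have h3 : ¬ a.2 < a.1 := not_lt.mpr (le_of_lt ha.1)
        simp [h, h3]
    · intro a ha
      simp only [hT, Finset.mem_filter, Finset.mem_univ, true_and] at ha
      by_cases h : a.1 < a.2
      · simp [h, ha]
      · have h2 : ¬ (B a.2).Interlaced (B a.1) := key _ _ ha
        simp [h, h2]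
  rw [h1]
  -- Step 2: fiberwise count
  have h2 : T.card = ∑ ij ∈ (Finset.Icc 1 n ×ˢ Finset.Icc 1 n),
      (T.filter (fun pq => ((B pq.2).birth - 1, (B pq.1).death + 1) = ij)).card := by
    apply Finset.card_eq_sum_card_fiberwise
    intro pq hpq
    simp only [hT, Finset.mem_coe, Finset.mem_filter, Finset.mem_univ, true_and] at hpq
    obtain ⟨h1, h2, h3⟩ := hpq
    have b1 := (B pq.1).one_le_birth
    have b2 := (B pq.2).one_le_birth
    have d2 := (B pq.2).death_le
    have bd2 := (B pq.2).birth_le_death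
    simp only [Finset.mem_coe, Finset.mem_product, Finset.mem_Icc]
    omega
  rw [h2, Finset.sum_product]
  apply Finset.sum_congr rfl
  intro i hi
  rw [Finset.mem_Icc] at hi
  have hsub : Finset.Icc (i + 2) n ⊆ Finset.Icc 1 n :=
    Finset.Icc_subset_Icc (by omega) le_rfl
  rw [← Finset.sum_subset hsub]
  · apply Finset.sum_congr rfl
    intro j hj
    rw [Finset.mem_Icc] at hj
    -- fiber = product of two filters
    have hfib : T.filter (fun pq => ((B pq.2).birth - 1, (B pq.1).death + 1) = (i, j))
        = (Finset.univ.filter fun p => (B p).birth ≤ i ∧ (B p).death = j - 1) ×ˢ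
          (Finset.univ.filter fun q => (B q).birth = i + 1 ∧ j ≤ (B q).death) := by
      ext pq
      simp only [hT, Finset.mem_filter, Finset.mem_univ, true_and, Finset.filter_filter,
        Finset.mem_product, Prod.ext_iff]
      simp only [NatBar.Interlaced]
      constructor
      · rintro ⟨⟨a1, a2, a3⟩, e1, e2⟩
        have b2 := (B pq.2).one_le_birth
        refine ⟨⟨by omega, by omega⟩, by omega, by omega⟩
      · rintro ⟨⟨a1, a2⟩, a3, a4⟩
        have b2 := (B pq.2).one_le_birth
        refine ⟨⟨by omega, by omega, by omega⟩, by omega, by omega⟩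
    rw [hfib, Finset.card_product]
    congr 1
    · -- pBetti B i (j-1) - pBetti B i j
      have hu : (Finset.univ.filter fun p => (B p).birth ≤ i ∧ j - 1 ≤ (B p).death)
          = (Finset.univ.filter fun p => (B p).birth ≤ i ∧ (B p).death = j - 1)
            ∪ (Finset.univ.filter fun p => (B p).birth ≤ i ∧ j ≤ (B p).death) := by
        ext p
        simp only [Finset.mem_filter, Finset.mem_union, Finset.mem_univ, true_and]
        omega
      have hd : Disjoint
          (Finset.univ.filter fun p => (B p).birth ≤ i ∧ (B p).death = j - 1)
          (Finset.univ.filter fun p => (B p).birth ≤ i ∧ j ≤ (B p).death) := by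
        rw [Finset.disjoint_left]
        intro p hp1 hp2
        simp only [Finset.mem_filter, Finset.mem_univ, true_and] at hp1 hp2
        omega
      have hc := congrArg Finset.card hu
      rw [Finset.card_union_of_disjoint hd] at hc
      simp only [pBetti]
      omega
    · -- pBetti B (i+1) j - pBetti B i j
      have hu : (Finset.univ.filter fun p => (B p).birth ≤ i + 1 ∧ j ≤ (B p).death)
          = (Finset.univ.filter fun p => (B p).birth = i + 1 ∧ j ≤ (B p).death)
            ∪ (Finset.univ.filter fun p => (B p).birth ≤ i ∧ j ≤ (B p).death) := by
        ext p
        simp only [Finset.mem_filter, Finset.mem_union, Finset.mem_univ, true_and]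
        omega
      have hd : Disjoint
          (Finset.univ.filter fun p => (B p).birth = i + 1 ∧ j ≤ (B p).death)
          (Finset.univ.filter fun p => (B p).birth ≤ i ∧ j ≤ (B p).death) := by
        rw [Finset.disjoint_left]
        intro p hp1 hp2
        simp only [Finset.mem_filter, Finset.mem_univ, true_and] at hp1 hp2
        omega
      have hc := congrArg Finset.card hu
      rw [Finset.card_union_of_disjoint hd] at hc
      simp only [pBetti]
      omega
  · -- fibers vanish for j < i + 2
    intro j hj hj2
    rw [Finset.mem_Icc] at hj
    rw [Finset.mem_Icc] at hj2
    rw [Finset.card_eq_zero, Finset.filter_eq_empty_iff]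
    intro pq hpq
    simp only [hT, Finset.mem_filter, Finset.mem_univ, true_and] at hpq
    obtain ⟨a1, a2, a3⟩ := hpq
    have b2 := (B pq.2).one_le_birth
    simp only [Prod.ext_iff]
    push_neg
    intro e1
    omega
end

section
/- Let B be a barcode over S = {1 < 2 < ⋯ < n} with persistent Betti numbers r_{i,j}. Then the number of non-separated pairs of bars in B (counted with multiplicity) equals Σ_{k=1}^{n−1} (r_{k,k} − r_{k,k+1})·(r_{k+1,k+1} − r_{k,k+1}). -/
/-!
Barcodes over the finite totally ordered set `S = {1 < 2 < ⋯ < n} ⊆ ℕ`.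
A bar (nonempty interval) in a finite total order is determined by its
birth (= min) and death (= max), so we record bars by these data.
-/

open scoped Classical

private lemma nonsep_iff {n : ℕ} (I J : NatBar n) :
    I.NonSep J ↔ J.birth = I.death + 1 := by
  have h1 := I.one_le_birth; have h2 := I.birth_le_death; have h3 := I.death_le
  have h4 := J.one_le_birth; have h5 := J.birth_le_death; have h6 := J.death_le
  constructor
  · rintro ⟨hd, hs⟩
    by_contra hne
    exact hs (I.death + 1) (by omega) (by omega) (by omega)
  · intro h
    exact ⟨by omega, fun s _ _ => by omega⟩

private lemma death_fiber {n N : ℕ} (B : Fin N → NatBar n) (k : ℕ) :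
    (Finset.univ.filter fun p => (B p).death = k).card + pBetti B k (k+1)
      = pBetti B k k := by
  rw [pBetti, pBetti, ← Finset.card_union_of_disjoint (by
    rw [Finset.disjoint_left]
    intro a ha hb
    simp only [Finset.mem_filter] at ha hb
    omega)]
  congr 1
  rw [← Finset.filter_or]
  apply Finset.filter_congr
  intro p _
  have := (B p).birth_le_death
  constructor
  · intro h; omega
  · intro h; omega

private lemma birth_fiber {n N : ℕ} (B : Fin N → NatBar n) (k : ℕ) :
    (Finset.univ.filter fun p => (B p).birth = k + 1).card + pBetti B k (k+1)
      = pBetti B (k+1) (k+1) := by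
  rw [pBetti, pBetti, ← Finset.card_union_of_disjoint (by
    rw [Finset.disjoint_left]
    intro a ha hb
    simp only [Finset.mem_filter] at ha hb
    omega)]
  congr 1
  rw [← Finset.filter_or]
  apply Finset.filter_congr
  intro p _
  have := (B p).birth_le_death
  constructor
  · intro h; omega
  · intro h; omega

/-- For a barcode `B` over `S = {1 < ⋯ < n}`, the number of
non-separated pairs of bars (counted with multiplicity) equals
`Σ_{k=1}^{n−1} (r_{k,k} − r_{k,k+1}) · (r_{k+1,k+1} − r_{k,k+1})`. -/
theorem card_nonseparated_pairs {n N : ℕ} (B : Fin N → NatBar n) :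
    ((Finset.univ : Finset (Fin N × Fin N)).filter
        (fun pq => pq.1 < pq.2 ∧
          ((B pq.1).NonSep (B pq.2) ∨ (B pq.2).NonSep (B pq.1)))).card
      = ∑ k ∈ Finset.Icc 1 (n - 1),
          (pBetti B k k - pBetti B k (k + 1))
            * (pBetti B (k + 1) (k + 1) - pBetti B k (k + 1)) := by
  classical
  -- Step 1: the LHS equals the number of ordered pairs (p, q) with
  -- birth (B q) = death (B p) + 1.
  have hL : ((Finset.univ : Finset (Fin N × Fin N)).filter
        (fun pq => pq.1 < pq.2 ∧
          ((B pq.1).NonSep (B pq.2) ∨ (B pq.2).NonSep (B pq.1)))).card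
      = ((Finset.univ : Finset (Fin N × Fin N)).filter
          (fun pq => (B pq.2).birth = (B pq.1).death + 1)).card := by
    apply Finset.card_bij'
      (i := fun pq _ => if (B pq.2).birth = (B pq.1).death + 1 then pq else pq.swap)
      (j := fun pq _ => if pq.1 < pq.2 then pq else pq.swap)
    · intro a ha
      simp only [Finset.mem_filter, Finset.mem_univ, true_and, nonsep_iff] at ha
      by_cases hc : (B a.2).birth = (B a.1).death + 1
      · rw [if_pos hc, if_pos ha.1]
      · rw [if_neg hc]
        have : ¬ (a.2 < a.1) := not_lt.mpr (le_of_lt ha.1)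
        simp [this]
    · intro a ha
      simp only [Finset.mem_filter, Finset.mem_univ, true_and] at ha
      have hkey : ¬ ((B a.1).birth = (B a.2).death + 1) := by
        have := (B a.1).birth_le_death; have := (B a.2).birth_le_death
        omega
      by_cases hc : a.1 < a.2
      · rw [if_pos hc, if_pos ha]
      · rw [if_neg hc]
        simp only [Prod.fst_swap, Prod.snd_swap]
        rw [if_neg hkey, Prod.swap_swap]
    · intro a ha
      simp only [Finset.mem_filter, Finset.mem_univ, true_and, nonsep_iff] at ha ⊢
      rcases ha with ⟨hlt, h | h⟩
      · rw [if_pos h]; exact h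
      · by_cases hc : (B a.2).birth = (B a.1).death + 1
        · rw [if_pos hc]; exact hc
        · rw [if_neg hc]; exact h
    · intro a ha
      simp only [Finset.mem_filter, Finset.mem_univ, true_and, nonsep_iff] at ha ⊢
      have hne : a.1 ≠ a.2 := by
        intro h
        rw [h] at ha
        have := (B a.2).birth_le_death
        omega
      by_cases hc : a.1 < a.2
      · rw [if_pos hc]; exact ⟨hc, Or.inl ha⟩
      · rw [if_neg hc]
        refine ⟨lt_of_le_of_ne (not_lt.mp hc) (Ne.symm hne), Or.inr ha⟩
  rw [hL]
  -- Step 2: partition by the death of the first bar.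
  rw [Finset.card_eq_sum_card_fiberwise (f := fun pq => (B pq.1).death)
    (t := Finset.Icc 1 (n - 1)) (by
      intro pq hpq
      simp only [Finset.mem_coe, Finset.mem_filter, Finset.mem_univ, true_and] at hpq
      have h1 := (B pq.1).one_le_birth
      have h2 := (B pq.1).birth_le_death
      have h3 := (B pq.2).birth_le_death
      have h4 := (B pq.2).death_le
      simp only [Finset.mem_coe, Finset.mem_Icc]
      omega)]
  apply Finset.sum_congr rfl
  intro k hk
  have e1 := death_fiber B k
  have e2 := birth_fiber B k
  have hfib : ((Finset.univ : Finset (Fin N × Fin N)).filter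
        (fun pq => (B pq.2).birth = (B pq.1).death + 1)).filter
          (fun pq => (B pq.1).death = k)
      = ((Finset.univ : Finset (Fin N)).filter fun p => (B p).death = k) ×ˢ
        ((Finset.univ : Finset (Fin N)).filter fun p => (B p).birth = k + 1) := by
    ext pq
    simp only [Finset.mem_filter, Finset.mem_univ, true_and, Finset.mem_product]
    constructor
    · rintro ⟨h1, h2⟩; exact ⟨h2, by omega⟩
    · rintro ⟨h1, h2⟩; exact ⟨by omega, h1⟩
  have h1 : pBetti B k k - pBetti B k (k+1)
      = (Finset.univ.filter fun p => (B p).death = k).card := by omega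
  have h2 : pBetti B (k+1) (k+1) - pBetti B k (k+1)
      = (Finset.univ.filter fun p => (B p).birth = k + 1).card := by omega
  rw [hfib, Finset.card_product, h1, h2]
end

section
/- Let B be a barcode over S = ℝ whose critical points all lie in the interval [m, M] and are pairwise at distance at least ε > 0. Let h ≥ 2 be an integer and let δ be a real number with 0 < δ ≤ ε/h. Let N be a natural number with m + Nδ ≥ M. Then the finite set S′ = {m, m+δ, m+2δ, …, m+Nδ} admits an h-approximation of B. -/
/-!
Barcodes over a totally ordered set `S`.

A bar is a nonempty interval of an ambient subset `P ⊆ S` (for a bar "in `S`"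
take `P = Set.univ`; for a bar of a restricted barcode `B|S′` take `P = ↑S′`).
Births and deaths live in `S ∪ {−∞, +∞}`, modelled as `WithBot (WithTop S)`;
following the standing assumption, every bar is equipped with its birth
(greatest lower bound) and death (least upper bound) there.
A barcode (finite multiset of bars) is modelled as an indexed family
`B : Fin N → BarIn P`; multiplicities are accounted for by the indexing.
-/

open scoped Classical

noncomputable section

variable {S : Type*} [LinearOrder S]

/-- The embedding of `S` into `S ∪ {−∞, +∞}`. -/
def emb (x : S) : WithBot (WithTop S) := ((x : WithTop S) : WithBot (WithTop S))

lemma emb_le_emb {x y : S} : emb x ≤ emb y ↔ x ≤ y := by simp [emb]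

/-- A bar in the totally ordered set `P ⊆ S`: a nonempty subset of `P` closed
under betweenness (relative to `P`), together with its birth (infimum) and
death (supremum) taken in `S ∪ {−∞, +∞}`. -/
structure BarIn (P : Set S) where
  carrier : Set S
  subset_amb : carrier ⊆ P
  nonempty : carrier.Nonempty
  isInterval : ∀ ⦃s u : S⦄, s ∈ carrier → u ∈ carrier →
      ∀ ⦃t : S⦄, t ∈ P → s ≤ t → t ≤ u → t ∈ carrier
  birth : WithBot (WithTop S)
  death : WithBot (WithTop S)
  birth_glb : IsGLB (emb '' carrier) birth
  death_lub : IsLUB (emb '' carrier) death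

namespace BarIn

variable {P : Set S}

/-- A pointbar is a bar consisting of a single element. -/
def Pointbar (I : BarIn P) : Prop := ∃ a : S, I.carrier = {a}

/-- Bars `I, J` (with `b(I) ≤ b(J)`) are interlaced if `b(I) < b(J) ≤ d(I) < d(J)`. -/
def Interlaced (I J : BarIn P) : Prop :=
  I.birth < J.birth ∧ J.birth ≤ I.death ∧ I.death < J.death

/-- Bars `I, J` are non-separated if `d(I) < b(J)` and no element of the ambient
totally ordered set `P` lies strictly between `d(I)` and `b(J)`. -/
def NonSep (I J : BarIn P) : Prop :=
  I.death < J.birth ∧ ∀ s ∈ P, ¬ (I.death < emb s ∧ emb s < J.birth)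

/-- Two bars form an interacting pair if (in one order or the other) they are
interlaced or non-separated. -/
def Interacting (I J : BarIn P) : Prop :=
  I.Interlaced J ∨ J.Interlaced I ∨ I.NonSep J ∨ J.NonSep I

end BarIn

/-- The quiver codimension of a barcode: the number of interacting pairs of
bars, counted with multiplicity (i.e. the number of index pairs `p < q` whose
bars interact). -/
def pairCount {N : ℕ} {P : Set S} (B : Fin N → BarIn P) : ℕ :=
  ((Finset.univ : Finset (Fin N × Fin N)).filter
    (fun pq => pq.1 < pq.2 ∧ (B pq.1).Interacting (B pq.2))).card

/-- The finite set `I ∩ S′`, for a bar `I` in `S` and a finite `S′ ⊆ S`. -/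
def interFinset (I : BarIn (Set.univ : Set S)) (S' : Finset S) : Finset S :=
  S'.filter (fun s => s ∈ I.carrier)

lemma interFinset_nonempty {I : BarIn (Set.univ : Set S)} {S' : Finset S}
    (h : (I.carrier ∩ ↑S').Nonempty) : (interFinset I S').Nonempty := by
  obtain ⟨x, hx1, hx2⟩ := h
  exact ⟨x, Finset.mem_filter.2 ⟨hx2, hx1⟩⟩

/-- Restriction of a bar `I` in `S` to a finite subset `S′ ⊆ S` meeting `I`:
the bar `I ∩ S′` of the totally ordered set `S′`, whose birth and death are the
min and max of the finite nonempty set `I ∩ S′`. -/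
def BarIn.restrict (I : BarIn (Set.univ : Set S)) (S' : Finset S)
    (h : (I.carrier ∩ ↑S').Nonempty) : BarIn (↑S' : Set S) where
  carrier := I.carrier ∩ ↑S'
  subset_amb := Set.inter_subset_right
  nonempty := h
  isInterval := fun s u hs hu t ht hst htu =>
    ⟨I.isInterval hs.1 hu.1 (Set.mem_univ t) hst htu, ht⟩
  birth := emb ((interFinset I S').min' (interFinset_nonempty h))
  death := emb ((interFinset I S').max' (interFinset_nonempty h))
  birth_glb := by
    constructor
    · rintro y ⟨x, hx, rfl⟩
      exact emb_le_emb.2 (Finset.min'_le _ x (Finset.mem_filter.2 ⟨hx.2, hx.1⟩))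
    · intro y hy
      have hmem := (interFinset I S').min'_mem (interFinset_nonempty h)
      simp only [interFinset, Finset.mem_filter] at hmem
      exact hy ⟨_, ⟨hmem.2, hmem.1⟩, rfl⟩
  death_lub := by
    constructor
    · rintro y ⟨x, hx, rfl⟩
      exact emb_le_emb.2 (Finset.le_max' _ x (Finset.mem_filter.2 ⟨hx.2, hx.1⟩))
    · intro y hy
      have hmem := (interFinset I S').max'_mem (interFinset_nonempty h)
      simp only [interFinset, Finset.mem_filter] at hmem
      exact hy ⟨_, ⟨hmem.2, hmem.1⟩, rfl⟩

/-- The set of critical points of the barcode `B`: all births and deaths of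
bars of `B` that lie in `S`. -/
def criticalPts {N : ℕ} (B : Fin N → BarIn (Set.univ : Set S)) : Set S :=
  {z : S | ∃ p : Fin N, (B p).birth = emb z ∨ (B p).death = emb z}

/-- `z` and `z'` are consecutive elements of `Z`. -/
def ConsecIn (Z : Set S) (z z' : S) : Prop :=
  z ∈ Z ∧ z' ∈ Z ∧ z < z' ∧ ∀ w ∈ Z, ¬ (z < w ∧ w < z')

/-- The finite set `S′ ⊆ S` admits an `h`-approximation of the barcode `B`
(with critical points `Z = {z_1 < ⋯ < z_m}`):
(i) some `s, t ∈ S′` satisfy `s ≤ z_1` and `z_m ≤ t`;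
(ii) whenever bars `I, J` of `B` with `d(I) = z_i`, `b(J) = z_{i+1}` for
consecutive critical points `z_i < z_{i+1}` do not form an interacting pair,
some `s ∈ S′` satisfies `z_i < s < z_{i+1}`;
(iii) for consecutive critical points `z_i < z_{i+1}`, `S′` contains at least
`h` elements of the closed interval `[z_i, z_{i+1}]`. -/
def IsHApprox {N : ℕ} (h : ℕ) (B : Fin N → BarIn (Set.univ : Set S))
    (S' : Finset S) : Prop :=
  ((∃ s ∈ S', ∀ z ∈ criticalPts B, s ≤ z) ∧ (∃ t ∈ S', ∀ z ∈ criticalPts B, z ≤ t))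
  ∧ (∀ z z', ConsecIn (criticalPts B) z z' →
      ∀ p q : Fin N, (B p).death = emb z → (B q).birth = emb z' →
        ¬ (B p).Interacting (B q) → ∃ s ∈ S', z < s ∧ s < z')
  ∧ (∀ z z', ConsecIn (criticalPts B) z z' →
      h ≤ (S'.filter (fun s => z ≤ s ∧ s ≤ z')).card)

/-- The number of interacting pairs of bars (counted with multiplicity) of the
restricted barcode `B|S′`, whose bars are the nonempty intersections `I ∩ S′`
for bars `I` of `B`, with interactions taken in the order on `S′`. -/
def restrictedPairCount {N : ℕ} (B : Fin N → BarIn (Set.univ : Set S))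
    (S' : Finset S) : ℕ :=
  ((Finset.univ : Finset (Fin N × Fin N)).filter
    (fun pq => pq.1 < pq.2 ∧
      ∃ (h1 : ((B pq.1).carrier ∩ ↑S').Nonempty)
        (h2 : ((B pq.2).carrier ∩ ↑S').Nonempty),
        ((B pq.1).restrict S' h1).Interacting ((B pq.2).restrict S' h2))).card



/-!
Consecutive critical points `z < z'` are at least `ε ≥ h δ` apart. Starting from the first grid
point at or after `z`, the next `h` grid points therefore all lie in `[z, z']`; and since
`h ≥ 2`, the gap `z' - z` exceeds the mesh `δ`, so the first grid point after `z` lies strictly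
before `z'`.
-/

def grid (m δ : ℝ) (n : ℕ) : Finset ℝ :=
  (Finset.range (n + 1)).image (fun k : ℕ => m + k * δ)

section

variable {m δ : ℝ} {n : ℕ}

lemma left_mem_grid : m ∈ grid m δ n :=
  Finset.mem_image.2 ⟨0, by simp, by simp⟩

lemma right_mem_grid : m + n * δ ∈ grid m δ n :=
  Finset.mem_image.2 ⟨n, Finset.self_mem_range_succ n, rfl⟩

lemma mem_grid (hδ : 0 < δ) {k : ℕ} (hk : m + k * δ ≤ m + n * δ) :
    m + k * δ ∈ grid m δ n := by
  have hkn : (k : ℝ) ≤ n := le_of_mul_le_mul_right (by linarith) hδ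
  exact Finset.mem_image.2
    ⟨k, Finset.mem_range.2 (Nat.lt_succ_of_le (by exact_mod_cast hkn)), rfl⟩

lemma exists_grid_point_mem_Ico (hδ : 0 < δ) {a : ℝ} (ha : m ≤ a) :
    ∃ k : ℕ, a ≤ m + k * δ ∧ m + k * δ < a + δ := by
  have hx : 0 ≤ (a - m) / δ := div_nonneg (by linarith) hδ.le
  refine ⟨⌈(a - m) / δ⌉₊, ?_, ?_⟩
  · have := (div_le_iff₀ hδ).1 (Nat.le_ceil ((a - m) / δ))
    linarith
  · have := mul_lt_mul_of_pos_right (Nat.ceil_lt_add_one hx) hδ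
    rw [add_mul, div_mul_cancel₀ _ hδ.ne'] at this
    linarith

lemma exists_grid_point_mem_Ioc (hδ : 0 < δ) {a : ℝ} (ha : m ≤ a) :
    ∃ k : ℕ, a < m + k * δ ∧ m + k * δ ≤ a + δ := by
  have hx : 0 ≤ (a - m) / δ := div_nonneg (by linarith) hδ.le
  refine ⟨⌊(a - m) / δ⌋₊ + 1, ?_, ?_⟩
  · have := mul_lt_mul_of_pos_right (Nat.lt_floor_add_one ((a - m) / δ)) hδ
    rw [div_mul_cancel₀ _ hδ.ne'] at this
    push_cast
    linarith
  · have := (le_div_iff₀ hδ).1 (Nat.floor_le hx)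
    push_cast
    linarith

lemma exists_mem_grid_mem_Ioo (hδ : 0 < δ) {a b : ℝ} (ha : m ≤ a) (hb : b ≤ m + n * δ)
    (hab : a + δ < b) : ∃ s ∈ grid m δ n, a < s ∧ s < b := by
  obtain ⟨k, hak, hkb⟩ := exists_grid_point_mem_Ioc hδ ha
  exact ⟨_, mem_grid hδ (by linarith), hak, by linarith⟩

lemma le_card_grid_filter_Icc (hδ : 0 < δ) {a b : ℝ} {h : ℕ} (ha : m ≤ a)
    (hb : b ≤ m + n * δ) (hab : a + h * δ ≤ b) :
    h ≤ ((grid m δ n).filter (fun s => a ≤ s ∧ s ≤ b)).card := by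
  obtain ⟨k, hak, hkb⟩ := exists_grid_point_mem_Ico hδ ha
  have hpt : ∀ j < h, a ≤ m + (k + j : ℕ) * δ ∧ m + (k + j : ℕ) * δ ≤ b := by
    intro j hj
    have hj1 : (j : ℝ) + 1 ≤ h := by exact_mod_cast hj
    have hjδ : 0 ≤ (j : ℝ) * δ := by positivity
    push_cast
    constructor <;> nlinarith
  calc h = (Finset.range h).card := (Finset.card_range h).symm
    _ ≤ _ := by
      refine Finset.card_le_card_of_injOn (fun j => m + (k + j : ℕ) * δ) ?_ ?_
      · intro j hj
        have hj := hpt j (Finset.mem_range.1 hj)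
        exact Finset.mem_filter.2 ⟨mem_grid hδ (by linarith), hj⟩
      · intro i _ j _ hij
        have : k + i = k + j := by exact_mod_cast mul_right_cancel₀ hδ.ne' (add_left_cancel hij)
        omega

end

theorem grid_isHApprox_general {N : ℕ} (B : Fin N → BarIn (Set.univ : Set ℝ))
    (m M ε δ : ℝ) (h : ℕ) (hh : 2 ≤ h)
    (hδ : 0 < δ)
    (hbound : ∀ z ∈ criticalPts B, m ≤ z ∧ z ≤ M)
    (hsep : ∀ z ∈ criticalPts B, ∀ z' ∈ criticalPts B, z ≠ z' → ε ≤ |z - z'|)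
    (hδε : δ ≤ ε / h)
    (n : ℕ) (hn : M ≤ m + n * δ) :
    IsHApprox h B ((Finset.range (n + 1)).image (fun k : ℕ => m + k * δ)) := by
  have h_two_le : (2 : ℝ) ≤ h := by exact_mod_cast hh
  have hhδ : h * δ ≤ ε := by rwa [le_div_iff₀' (by linarith)] at hδε
  have hgap : ∀ z z', ConsecIn (criticalPts B) z z' →
      m ≤ z ∧ z' ≤ m + n * δ ∧ z + h * δ ≤ z' := by
    rintro z z' ⟨hz, hz', hlt, -⟩
    have hεz := hsep z hz z' hz' hlt.ne
    rw [abs_sub_comm, abs_of_pos (sub_pos.2 hlt)] at hεz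
    exact ⟨(hbound z hz).1, (hbound z' hz').2.trans hn, by linarith⟩
  refine ⟨⟨⟨m, left_mem_grid, fun z hz => (hbound z hz).1⟩,
      ⟨m + n * δ, right_mem_grid, fun z hz => (hbound z hz).2.trans hn⟩⟩, ?_, ?_⟩
  · rintro z z' hzz' - - - - -
    obtain ⟨hm, hM, hgap⟩ := hgap z z' hzz'
    exact exists_mem_grid_mem_Ioo hδ hm hM (by nlinarith)
  · intro z z' hzz'
    obtain ⟨hm, hM, hgap⟩ := hgap z z' hzz'
    exact le_card_grid_filter_Icc hδ hm hM hgap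

/-- Let `B` be a barcode over `S = ℝ` whose critical points
all lie in `[m, M]` and are pairwise at distance at least `ε > 0`. Let `h ≥ 2`
be an integer, let `0 < δ ≤ ε / h`, and let `n` be a natural number with
`m + nδ ≥ M`. Then the finite set `S′ = {m, m+δ, m+2δ, …, m+nδ}` admits an
`h`-approximation of `B`. -/
theorem grid_isHApprox {N : ℕ} (B : Fin N → BarIn (Set.univ : Set ℝ))
    (m M ε δ : ℝ) (h : ℕ) (hh : 2 ≤ h)
    (hε : 0 < ε) (hδ : 0 < δ)
    (hbound : ∀ z ∈ criticalPts B, m ≤ z ∧ z ≤ M)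
    (hsep : ∀ z ∈ criticalPts B, ∀ z' ∈ criticalPts B, z ≠ z' → ε ≤ |z - z'|)
    (hδε : δ ≤ ε / h)
    (n : ℕ) (hn : M ≤ m + n * δ) :
    IsHApprox h B ((Finset.range (n + 1)).image (fun k : ℕ => m + k * δ)) :=
  grid_isHApprox_general B m M ε δ h hh hδ hbound hsep hδε n hn

end
end
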